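/- arXiv:2508.04168 — 4 statements merged into one kernel-verified Lean document; each statement's English description precedes it below -/
import Mathlib

section
/- Let S₁ = [[1-bc,b,0],[c,0,0],[0,0,1]] and X₁ = [[0,b,0],[1/b,0,0],[0,0,1]] (with S₂, X₂ the corresponding lower-right block versions). Then the over-forbidden relation S₁S₂X₁ = X₂S₁S₂ holds in GL_3(ℂ) for b,c ∈ ℂ with bc ≠ 0. -/
open Matrix

theorem over_forbidden_burau_type (b c : ℂ) (h : b * c ≠ 0) :
    let S₁ : Matrix (Fin 3) (Fin 3) ℂ := !![1 - b * c, b, 0; c, 0, 0; 0, 0, 1]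
    let S₂ : Matrix (Fin 3) (Fin 3) ℂ := !![1, 0, 0; 0, 1 - b * c, b; 0, c, 0]
    let X₁ : Matrix (Fin 3) (Fin 3) ℂ := !![0, b, 0; b⁻¹, 0, 0; 0, 0, 1]
    let X₂ : Matrix (Fin 3) (Fin 3) ℂ := !![1, 0, 0; 0, 0, b; 0, b⁻¹, 0]
    S₁ * S₂ * X₁ = X₂ * S₁ * S₂ := by
  have hb : b ≠ 0 := fun hb => h (by simp [hb])
  intro S₁ S₂ X₁ X₂
  simp only [S₁, S₂, X₁, X₂]
  ext i j
  fin_cases i <;> fin_cases j <;>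
    simp [Matrix.mul_apply, Fin.sum_univ_succ] <;> (try field_simp [hb]) <;> ring
end

section
/- For two involutive block matrices with x ≠ 0 and q ≠ 0, the mixed virtual relation X₁X₂Y₁ = Y₂X₁X₂ holds in GL_3(ℂ), where X uses parameter x and Y uses parameter q. -/
open Matrix

theorem mixed_virtual_relation (x q : ℂ) (hx : x ≠ 0) (hq : q ≠ 0) :
    let X₁ : Matrix (Fin 3) (Fin 3) ℂ := !![0, x, 0; x⁻¹, 0, 0; 0, 0, 1]
    let X₂ : Matrix (Fin 3) (Fin 3) ℂ := !![1, 0, 0; 0, 0, x; 0, x⁻¹, 0]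
    let Y₁ : Matrix (Fin 3) (Fin 3) ℂ := !![0, q, 0; q⁻¹, 0, 0; 0, 0, 1]
    let Y₂ : Matrix (Fin 3) (Fin 3) ℂ := !![1, 0, 0; 0, 0, q; 0, q⁻¹, 0]
    X₁ * X₂ * Y₁ = Y₂ * X₁ * X₂ := by
  intro X₁ X₂ Y₁ Y₂
  ext i j
  fin_cases i <;> fin_cases j <;>
    simp [X₁, X₂, Y₁, Y₂, Matrix.mul_apply, Fin.sum_univ_succ, mul_comm]
end

section
/- With K(σ₁), K(σ₂) as the t=1 LKB matrices and P₁ = [[1,0,0],[0,0,1],[0,1,0]], P₂ = [[0,1,0],[1,0,0],[0,0,1]], the welded relations hold: P₁² = P₂² = I, P₁P₂P₁ = P₂P₁P₂, K(σ₁)P₂P₁ = P₂P₁K(σ₂), and the over-forbidden relation K(σ₁)K(σ₂)P₁ = P₂K(σ₁)K(σ₂). -/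
open Matrix

theorem lkb_t_one_welded_relations_general (q : ℂ) :
    let A : Matrix (Fin 3) (Fin 3) ℂ :=
      !![q ^ 2, q * (q - 1), 0; 0, 1 - q, 1; 0, q, 0]
    let B : Matrix (Fin 3) (Fin 3) ℂ :=
      !![1 - q, 1, 0; q, 0, 0; q * (q - 1), 0, q ^ 2]
    let P₁ : Matrix (Fin 3) (Fin 3) ℂ := !![1, 0, 0; 0, 0, 1; 0, 1, 0]
    let P₂ : Matrix (Fin 3) (Fin 3) ℂ := !![0, 1, 0; 1, 0, 0; 0, 0, 1]
    P₁ * P₁ = 1 ∧ P₂ * P₂ = 1 ∧ P₁ * P₂ * P₁ = P₂ * P₁ * P₂ ∧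
      A * P₂ * P₁ = P₂ * P₁ * B ∧ A * B * P₁ = P₂ * (A * B) := by
  intro A B P₁ P₂
  let C : Matrix (Fin 3) (Fin 3) ℂ := !![0, 1, 0; 0, 0, 1; 1, 0, 0]
  have hAB : A * B = q ^ 2 • C := by
    ext i j
    fin_cases i <;> fin_cases j <;> simp [A, B, C, mul_apply, Fin.sum_univ_three] <;> ring
  have hCP : C * P₁ = P₂ * C := by simp [C, P₁, P₂]
  refine ⟨?_, ?_, ?_, ?_, ?_⟩
  · simp [P₁, one_fin_three]
  · simp [P₂, one_fin_three]
  · simp [P₁, P₂]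
  · simp [A, B, P₁, P₂]
  · rw [hAB, smul_mul, Matrix.mul_smul, hCP]

theorem lkb_t_one_welded_relations (q : ℂ) (hq : q ≠ 0) :
    let A : Matrix (Fin 3) (Fin 3) ℂ :=
      !![q ^ 2, q * (q - 1), 0; 0, 1 - q, 1; 0, q, 0]
    let B : Matrix (Fin 3) (Fin 3) ℂ :=
      !![1 - q, 1, 0; q, 0, 0; q * (q - 1), 0, q ^ 2]
    let P₁ : Matrix (Fin 3) (Fin 3) ℂ := !![1, 0, 0; 0, 0, 1; 0, 1, 0]
    let P₂ : Matrix (Fin 3) (Fin 3) ℂ := !![0, 1, 0; 1, 0, 0; 0, 0, 1]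
    P₁ * P₁ = 1 ∧ P₂ * P₂ = 1 ∧ P₁ * P₂ * P₁ = P₂ * P₁ * P₂ ∧
      A * P₂ * P₁ = P₂ * P₁ * B ∧ A * B * P₁ = P₂ * (A * B) :=
  lkb_t_one_welded_relations_general q
end

section
/- If S = [[0,b],[c,0]] with bc ≠ 0 and bc ≠ 1, then the subgroup of GL₃(ℂ) generated by S₁ = diag(S,1) and S₂ = diag(1,S) acts irreducibly on ℂ³. -/
open Matrix

theorem antidiag_blocks_irreducible (b c : ℂ) (hbc : b * c ≠ 0)
    (hbc1 : b * c ≠ 1) :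
    let S₁ : Matrix (Fin 3) (Fin 3) ℂ := !![0, b, 0; c, 0, 0; 0, 0, 1]
    let S₂ : Matrix (Fin 3) (Fin 3) ℂ := !![1, 0, 0; 0, 0, b; 0, c, 0]
    ¬ ∃ p : Submodule ℂ (Fin 3 → ℂ), p ≠ ⊥ ∧ p ≠ ⊤ ∧
        (∀ v ∈ p, S₁ *ᵥ v ∈ p) ∧ (∀ v ∈ p, S₂ *ᵥ v ∈ p) := by
  intro S₁ S₂
  rintro ⟨p, hbot, htop, h1, h2⟩
  have hb : b ≠ 0 := fun h => hbc (by simp [h])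
  have hc : c ≠ 0 := fun h => hbc (by simp [h])
  have hone : (1 : ℂ) - b * c ≠ 0 := sub_ne_zero.mpr (Ne.symm hbc1)
  obtain ⟨v, hv, hv0⟩ := (Submodule.ne_bot_iff p).mp hbot
  -- S₁² w - bc w isolates the last coordinate
  have h3 : ∀ w ∈ p, (![(0:ℂ), 0, w 2] : Fin 3 → ℂ) ∈ p := by
    intro w hw
    have hmem := p.smul_mem ((1 : ℂ) - b * c)⁻¹
      (p.sub_mem (h1 _ (h1 _ hw)) (p.smul_mem (b * c) hw))
    have : (![(0:ℂ), 0, w 2] : Fin 3 → ℂ) =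
        ((1 : ℂ) - b * c)⁻¹ • (S₁ *ᵥ (S₁ *ᵥ w) - (b * c) • w) := by
      funext i
      fin_cases i <;>
        simp [S₁, Matrix.mulVec, dotProduct, Fin.sum_univ_three] <;>
        first | tauto | exact Or.inr (by ring) | (field_simp; try ring)
    rwa [this]
  have h4 : ∀ w ∈ p, (![w 0, (0:ℂ), 0] : Fin 3 → ℂ) ∈ p := by
    intro w hw
    have hmem := p.smul_mem ((1 : ℂ) - b * c)⁻¹
      (p.sub_mem (h2 _ (h2 _ hw)) (p.smul_mem (b * c) hw))
    have : (![w 0, (0:ℂ), 0] : Fin 3 → ℂ) =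
        ((1 : ℂ) - b * c)⁻¹ • (S₂ *ᵥ (S₂ *ᵥ w) - (b * c) • w) := by
      funext i
      fin_cases i <;>
        simp [S₂, Matrix.mulVec, dotProduct, Fin.sum_univ_three] <;>
        first | tauto | exact Or.inr (by ring) | (field_simp; try ring)
    rwa [this]
  -- propagation between basis vectors
  have e0_of_e1 : (![(0:ℂ),1,0] : Fin 3 → ℂ) ∈ p → (![(1:ℂ),0,0] : Fin 3 → ℂ) ∈ p := by
    intro h
    have := p.smul_mem b⁻¹ (h1 _ h)
    have heq : (![(1:ℂ),0,0] : Fin 3 → ℂ) = b⁻¹ • (S₁ *ᵥ ![(0:ℂ),1,0]) := by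
      funext i
      fin_cases i <;>
        simp [S₁, Matrix.mulVec, dotProduct, Fin.sum_univ_three] <;>
        field_simp
    rwa [heq]
  have e2_of_e1 : (![(0:ℂ),1,0] : Fin 3 → ℂ) ∈ p → (![(0:ℂ),0,1] : Fin 3 → ℂ) ∈ p := by
    intro h
    have := p.smul_mem c⁻¹ (h2 _ h)
    have heq : (![(0:ℂ),0,1] : Fin 3 → ℂ) = c⁻¹ • (S₂ *ᵥ ![(0:ℂ),1,0]) := by
      funext i
      fin_cases i <;>
        simp [S₂, Matrix.mulVec, dotProduct, Fin.sum_univ_three] <;>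
        field_simp
    rwa [heq]
  have e1_of_e0 : (![(1:ℂ),0,0] : Fin 3 → ℂ) ∈ p → (![(0:ℂ),1,0] : Fin 3 → ℂ) ∈ p := by
    intro h
    have := p.smul_mem c⁻¹ (h1 _ h)
    have heq : (![(0:ℂ),1,0] : Fin 3 → ℂ) = c⁻¹ • (S₁ *ᵥ ![(1:ℂ),0,0]) := by
      funext i
      fin_cases i <;>
        simp [S₁, Matrix.mulVec, dotProduct, Fin.sum_univ_three] <;>
        field_simp
    rwa [heq]
  have e1_of_e2 : (![(0:ℂ),0,1] : Fin 3 → ℂ) ∈ p → (![(0:ℂ),1,0] : Fin 3 → ℂ) ∈ p := by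
    intro h
    have := p.smul_mem b⁻¹ (h2 _ h)
    have heq : (![(0:ℂ),1,0] : Fin 3 → ℂ) = b⁻¹ • (S₂ *ᵥ ![(0:ℂ),0,1]) := by
      funext i
      fin_cases i <;>
        simp [S₂, Matrix.mulVec, dotProduct, Fin.sum_univ_three] <;>
        field_simp
    rwa [heq]
  -- get e1 ∈ p
  have he1 : (![(0:ℂ),1,0] : Fin 3 → ℂ) ∈ p := by
    by_cases hx : v 0 ≠ 0
    · have := p.smul_mem (v 0)⁻¹ (h4 v hv)
      have heq : (![(1:ℂ),0,0] : Fin 3 → ℂ) = (v 0)⁻¹ • (![v 0, (0:ℂ), 0] : Fin 3 → ℂ) := by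
        funext i; fin_cases i <;> simp <;> field_simp
      rw [← heq] at this
      exact e1_of_e0 this
    · by_cases hz : v 2 ≠ 0
      · have := p.smul_mem (v 2)⁻¹ (h3 v hv)
        have heq : (![(0:ℂ),0,1] : Fin 3 → ℂ) = (v 2)⁻¹ • (![(0:ℂ), 0, v 2] : Fin 3 → ℂ) := by
          funext i; fin_cases i <;> simp <;> field_simp
        rw [← heq] at this
        exact e1_of_e2 this
      · push_neg at hx hz
        have hy : v 1 ≠ 0 := by
          intro hy
          apply hv0
          funext i; fin_cases i <;> simp [hx, hy, hz]
        have := p.smul_mem (v 1)⁻¹ hv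
        have heq : (![(0:ℂ),1,0] : Fin 3 → ℂ) = (v 1)⁻¹ • v := by
          funext i; fin_cases i <;> simp [hx, hz] <;> field_simp
        rwa [heq]
  have he0 := e0_of_e1 he1
  have he2 := e2_of_e1 he1
  apply htop
  rw [Submodule.eq_top_iff']
  intro w
  have hw : w = w 0 • (![(1:ℂ),0,0] : Fin 3 → ℂ) + w 1 • ![(0:ℂ),1,0] + w 2 • ![(0:ℂ),0,1] := by
    funext i; fin_cases i <;> simp
  rw [hw]
  exact p.add_mem (p.add_mem (p.smul_mem _ he0) (p.smul_mem _ he1)) (p.smul_mem _ he2)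
end
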